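/- arXiv:1701.07980 — 2 statements merged into one kernel-verified Lean document; each statement's English description precedes it below -/
import Mathlib

section
/- Let G be a faithfully representable Lie group, K a compact Lie group, and ρ ∈ hom(K,G) an injective continuous homomorphism. Then the right action of Mon(G;ρ) on hom(K,G;ρ) by composition is free: if φ ∈ hom(K,G;ρ) and μ ∈ Mon(G;ρ) satisfy φ∘μ = φ, then μ = id_K. -/
/-!
A group with a faithful finite-dimensional representation has no small subgroups, since the
exponential of a Banach algebra is a local homeomorphism at `0`. For compact `K`, the
homomorphisms `K → G` killing a fixed compact subgroup then form a clopen subset of `hom(K,G)`: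
open because the image of that subgroup under a nearby homomorphism would be a small subgroup.
So the kernel is constant along paths, and it is invariant under conjugation, hence constant on
`hom(K,G;ρ)`. Every `φ ∈ hom(K,G;ρ)` is therefore injective like `ρ`, and `φ ∘ μ = φ` forces
`μ = id`.
-/

open scoped Manifold

noncomputable section Paper

/-- The conjugate `c_g ∘ φ` of a continuous homomorphism `φ` by a group element `g`. -/
def conjCMH {K G : Type*} [Group K] [TopologicalSpace K] [Group G]
    [TopologicalSpace G] [IsTopologicalGroup G] (g : G) (φ : ContinuousMonoidHom K G) :
    ContinuousMonoidHom K G :=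
  { toFun := fun k => g * φ k * g⁻¹
    map_one' := by simp
    map_mul' := fun a b => by
      show g * φ (a * b) * g⁻¹ = (g * φ a * g⁻¹) * (g * φ b * g⁻¹)
      rw [map_mul]; group
    continuous_toFun := (continuous_const.mul (map_continuous φ)).mul continuous_const }

/-- The relation on `hom(K,G)` generated by: lying in the same path-component, and being
conjugate. -/
def homRel {K G : Type*} [Group K] [TopologicalSpace K] [Group G]
    [TopologicalSpace G] [IsTopologicalGroup G] (φ ψ : ContinuousMonoidHom K G) : Prop :=
  Joined φ ψ ∨ ∃ g : G, ψ = conjCMH g φ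

/-- `hom(K,G;ρ)`: the smallest subset of `hom(K,G)` containing `ρ` which is a union of
path-components and closed under conjugation, i.e. the equivalence class of `ρ` under the
equivalence relation generated by `homRel`. -/
def homClass {K G : Type*} [Group K] [TopologicalSpace K] [Group G]
    [TopologicalSpace G] [IsTopologicalGroup G] (ρ : ContinuousMonoidHom K G) :
    Set (ContinuousMonoidHom K G) :=
  {φ | Relation.EqvGen homRel ρ φ}

/-- `Aut(K)`: the group of homeomorphic group automorphisms of `K`, as a subgroup of `MulAut K`. -/
def contAut (K : Type*) [Group K] [TopologicalSpace K] : Subgroup (MulAut K) where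
  carrier := {e | Continuous e ∧ Continuous e.symm}
  one_mem' := ⟨continuous_id, continuous_id⟩
  mul_mem' := by
    intro a b ha hb
    refine ⟨?_, ?_⟩
    · have h : ⇑(a * b) = ⇑a ∘ ⇑b := rfl
      exact h ▸ ha.1.comp hb.1
    · have h : ⇑(a * b).symm = ⇑b.symm ∘ ⇑a.symm := rfl
      exact h ▸ hb.2.comp ha.2
  inv_mem' := by
    intro a ha
    exact ⟨ha.2, ha.1⟩

/-- Precomposition of a continuous homomorphism with a (continuous) automorphism. -/
def precompCMH {K G : Type*} [Group K] [TopologicalSpace K] [Group G]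
    [TopologicalSpace G] (φ : ContinuousMonoidHom K G) (μ : contAut K) :
    ContinuousMonoidHom K G :=
  ⟨φ.toMonoidHom.comp (μ : MulAut K).toMonoidHom, (map_continuous φ).comp μ.property.1⟩

theorem precompCMH_one {K G : Type*} [Group K] [TopologicalSpace K] [Group G]
    [TopologicalSpace G] (φ : ContinuousMonoidHom K G) : precompCMH φ 1 = φ := by
  ext k; rfl

theorem precompCMH_mul {K G : Type*} [Group K] [TopologicalSpace K] [Group G]
    [TopologicalSpace G] (φ : ContinuousMonoidHom K G) (μ ν : contAut K) :
    precompCMH φ (μ * ν) = precompCMH (precompCMH φ μ) ν := by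
  ext k; rfl

/-- The subgroup of `Aut(K)` of automorphisms `μ` whose right composition action preserves a
given subset `S` of a set `X` with a right `Aut(K)`-action `act`. -/
def monOf {K X : Type*} [Group K] [TopologicalSpace K]
    (act : X → contAut K → X) (hone : ∀ x, act x 1 = x)
    (hmul : ∀ x μ ν, act x (μ * ν) = act (act x μ) ν) (S : Set X) :
    Subgroup (contAut K) where
  carrier := {μ | (fun x => act x μ) '' S = S}
  one_mem' := by
    simp only [Set.mem_setOf_eq, hone, Set.image_id']
  mul_mem' := by
    intro a b ha hb
    simp only [Set.mem_setOf_eq] at ha hb ⊢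
    have key : (fun x => act x (a * b)) '' S = (fun x => act x b) '' ((fun x => act x a) '' S) := by
      rw [Set.image_image]
      exact Set.image_congr' fun x => (hmul x a b)
    rw [key, ha, hb]
  inv_mem' := by
    intro a ha
    simp only [Set.mem_setOf_eq] at ha ⊢
    conv_lhs => rw [← ha]
    rw [Set.image_image]
    have h1 : ∀ x, act (act x a) a⁻¹ = x := fun x => by
      rw [← hmul]; simp [hone]
    calc (fun x => act (act x a) a⁻¹) '' S = (fun x => x) '' S :=
          Set.image_congr' h1
      _ = S := Set.image_id' S

/-- The monodromy group `Mon(G;ρ) ≤ Aut(K)`. -/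
def Mon {K G : Type*} [Group K] [TopologicalSpace K] [Group G]
    [TopologicalSpace G] [IsTopologicalGroup G] (ρ : ContinuousMonoidHom K G) :
    Subgroup (contAut K) :=
  monOf precompCMH precompCMH_one precompCMH_mul (homClass ρ)

theorem mem_Mon_iff {K G : Type*} [Group K] [TopologicalSpace K] [Group G]
    [TopologicalSpace G] [IsTopologicalGroup G] (ρ : ContinuousMonoidHom K G) (μ : contAut K) :
    μ ∈ Mon ρ ↔ (fun φ => precompCMH φ μ) '' homClass ρ = homClass ρ :=
  Iff.rfl

/-- `Inn(K)`: the subgroup of `Aut(K)` of inner automorphisms. -/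
def innAut (K : Type*) [Group K] [TopologicalSpace K] : Subgroup (contAut K) where
  carrier := {μ | ∃ k : K, (μ : MulAut K) = MulAut.conj k}
  one_mem' := ⟨1, by simp⟩
  mul_mem' := by
    rintro a b ⟨k, hk⟩ ⟨l, hl⟩
    exact ⟨k * l, by rw [Subgroup.coe_mul, hk, hl, map_mul]⟩
  inv_mem' := by
    rintro a ⟨k, hk⟩
    exact ⟨k⁻¹, by
      rw [show ((a⁻¹ : contAut K) : MulAut K) = (a : MulAut K)⁻¹ from rfl, hk, map_inv]⟩

/-- `χ : G → ℂ` is a character of `G`: the trace of some continuous finite-dimensional complex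
representation of `G`. -/
def IsCharacter {G : Type*} [Group G] [TopologicalSpace G] (χ : G → ℂ) : Prop :=
  ∃ (n : ℕ) (r : G →* Matrix.GeneralLinearGroup (Fin n) ℂ),
    Continuous r ∧ ∀ g, χ g = Matrix.trace (r g : Matrix (Fin n) (Fin n) ℂ)

/-- `χ : G → ℂ` is a faithful character of `G`: the trace of some injective continuous
finite-dimensional complex representation of `G`. -/
def IsFaithfulCharacter {G : Type*} [Group G] [TopologicalSpace G] (χ : G → ℂ) : Prop :=
  ∃ (n : ℕ) (r : G →* Matrix.GeneralLinearGroup (Fin n) ℂ),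
    Continuous r ∧ Function.Injective r ∧ ∀ g, χ g = Matrix.trace (r g : Matrix (Fin n) (Fin n) ℂ)

/-- A topological (Lie) group is faithfully representable if it admits an injective continuous
homomorphism into `GL(V)` for some finite-dimensional complex vector space `V`. -/
def FaithfullyRepresentable (G : Type*) [Group G] [TopologicalSpace G] : Prop :=
  ∃ (n : ℕ) (r : G →* Matrix.GeneralLinearGroup (Fin n) ℂ),
    Continuous r ∧ Function.Injective r

/-- The space `P` encoding `hom(K, G⋉M)`: pairs `(φ, y)` with `φ ∈ hom(K,G)` and `y` a point of
`M` fixed by `φ(K)`. -/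
def actPairs (K G M : Type*) [Group K] [TopologicalSpace K] [Group G] [TopologicalSpace G]
    [SMul G M] : Set (ContinuousMonoidHom K G × M) :=
  {p | ∀ k : K, p.1 k • p.2 = p.2}

/-- The relation on `P = actPairs K G M` generated by: being joined by a path inside `P`, and
being related by the `G`-action `g • (φ, y) = (c_g ∘ φ, g • y)`. -/
def actRel {K G M : Type*} [Group K] [TopologicalSpace K] [Group G] [TopologicalSpace G]
    [IsTopologicalGroup G] [SMul G M] [TopologicalSpace M]
    (p q : ContinuousMonoidHom K G × M) : Prop :=
  JoinedIn (actPairs K G M) p q ∨ ∃ g : G, q = (conjCMH g p.1, g • p.2)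

/-- `P(σ,x) = hom(K, G⋉M; σ̄(x))`: the smallest subset of `P` containing `(σ,x)` which is a union
of path-components of `P` and invariant under the `G`-action. -/
def actClass {K G M : Type*} [Group K] [TopologicalSpace K] [Group G] [TopologicalSpace G]
    [IsTopologicalGroup G] [SMul G M] [TopologicalSpace M]
    (σ : ContinuousMonoidHom K G) (x : M) : Set (ContinuousMonoidHom K G × M) :=
  {p | Relation.EqvGen actRel (σ, x) p}

/-- The monodromy group `Mon(G⋉M; σ̄(x)) ≤ Aut(K)` of the action groupoid. -/
def MonAct {K G M : Type*} [Group K] [TopologicalSpace K] [Group G] [TopologicalSpace G]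
    [IsTopologicalGroup G] [SMul G M] [TopologicalSpace M]
    (σ : ContinuousMonoidHom K G) (x : M) : Subgroup (contAut K) :=
  monOf (fun p μ => (precompCMH p.1 μ, p.2)) (fun p => by simp [precompCMH_one])
    (fun p μ ν => by simp [precompCMH_mul]) (actClass σ x)

/-- The setoid on `G × A` identifying `(g, y)` with `(g⬝h, h⁻¹⬝y)` for `h` in a subgroup `H`. -/
def cosetSetoid {G M : Type*} [Group G] [MulAction G M] (H : Subgroup G) (A : Set M) :
    Setoid (G × A) where
  r p q := ∃ h ∈ H, q.1 = p.1 * h ∧ (q.2 : M) = h⁻¹ • (p.2 : M)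
  iseqv := by
    constructor
    · exact fun p => ⟨1, H.one_mem, by simp, by simp⟩
    · rintro p q ⟨h, hH, h1, h2⟩
      refine ⟨h⁻¹, H.inv_mem hH, ?_, ?_⟩
      · rw [h1]; group
      · rw [h2]; simp [smul_smul]
    · rintro p q s ⟨h, hH, h1, h2⟩ ⟨h', hH', h1', h2'⟩
      refine ⟨h * h', H.mul_mem hH hH', ?_, ?_⟩
      · rw [h1', h1]; group
      · rw [h2', h2]; simp [smul_smul, mul_inv_rev]


/-- Postcomposition of a continuous homomorphism with a (continuous) automorphism. -/
def postCMH {K G : Type*} [Group K] [TopologicalSpace K] [Group G]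
    [TopologicalSpace G] (ν : contAut G) (φ : ContinuousMonoidHom K G) :
    ContinuousMonoidHom K G :=
  ⟨(ν : MulAut G).toMonoidHom.comp φ.toMonoidHom, ν.property.1.comp (map_continuous φ)⟩

def NoSmallSubgroups (G : Type*) [Group G] [TopologicalSpace G] : Prop :=
  ∃ U : Set G, IsOpen U ∧ (1 : G) ∈ U ∧ ∀ H : Subgroup G, (H : Set G) ⊆ U → H = ⊥

theorem NoSmallSubgroups.of_injective {G H : Type*} [Group G] [TopologicalSpace G] [Group H]
    [TopologicalSpace H] (hH : NoSmallSubgroups H) (f : G →* H) (hf : Continuous f)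
    (hinj : Function.Injective f) : NoSmallSubgroups G := by
  obtain ⟨U, hUo, hU1, hU⟩ := hH
  refine ⟨f ⁻¹' U, hUo.preimage hf, by simpa using hU1, fun S hS => ?_⟩
  have hmap : S.map f = ⊥ := hU _ (by simpa [Set.image_subset_iff] using hS)
  rw [Subgroup.map_eq_bot_iff, (MonoidHom.ker_eq_bot_iff f).mpr hinj] at hmap
  exact le_bot_iff.mp hmap

open NormedSpace Metric in
/-- Take `U = exp (B(0, r/2))` with `exp` injective on `B(0, r)`. If all powers of `a = exp X`
lie in `U`, injectivity shows inductively that every multiple `m • X` lies in `B(0, r/2)`,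
so `X = 0`. -/
theorem exists_isOpen_forall_pow_mem_eq_one {A : Type*} [NormedRing A] [NormedAlgebra ℝ A]
    [CompleteSpace A] :
    ∃ U : Set A, IsOpen U ∧ (1 : A) ∈ U ∧ ∀ a : A, (∀ n : ℕ, a ^ n ∈ U) → a = 1 := by
  let _ : NormedAlgebra ℚ A := NormedAlgebra.restrictScalars ℚ ℝ A
  have hd : HasStrictFDerivAt (exp : A → A)
      ((ContinuousLinearEquiv.refl ℝ A : A ≃L[ℝ] A) : A →L[ℝ] A) 0 :=
    hasStrictFDerivAt_exp_zero
  set e := hd.toOpenPartialHomeomorph exp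
  have he : ⇑e = exp := hd.toOpenPartialHomeomorph_coe
  obtain ⟨r, hr, hball⟩ :=
    Metric.isOpen_iff.mp e.open_source 0 hd.mem_toOpenPartialHomeomorph_source
  have hhalf : ball (0 : A) (r / 2) ⊆ e.source := (ball_subset_ball (by linarith)).trans hball
  refine ⟨exp '' ball 0 (r / 2), ?_, ⟨0, mem_ball_self (by linarith), exp_zero⟩, ?_⟩
  · rw [← he]
    exact e.isOpen_image_of_subset_source isOpen_ball hhalf
  intro a ha
  obtain ⟨X, hX1, rfl⟩ : a ∈ exp '' ball 0 (r / 2) := by simpa using ha 1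
  have hmul : ∀ m : ℕ, m • X ∈ ball (0 : A) (r / 2) := by
    intro m
    induction m with
    | zero => simpa using hr
    | succ m ih =>
      obtain ⟨Y, hY, hYX⟩ := ha (m + 1)
      have hsucc : (m + 1) • X ∈ ball (0 : A) r := by
        rw [mem_ball_zero_iff] at ih hX1 ⊢
        calc ‖(m + 1) • X‖ ≤ ‖m • X‖ + ‖X‖ := by rw [succ_nsmul]; exact norm_add_le _ _
          _ < r := by linarith
      have : (m + 1) • X = Y :=
        e.injOn (hball hsucc) (hhalf hY) (by rw [he, exp_nsmul, hYX])
      exact this ▸ hY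
  have hX : X = 0 := by
    by_contra hX0
    have hpos : 0 < ‖X‖ := norm_pos_iff.mpr hX0
    obtain ⟨m, hm⟩ := exists_nat_gt (r / 2 / ‖X‖)
    have hm' := mem_ball_zero_iff.mp (hmul m)
    rw [RCLike.norm_nsmul ℝ, nsmul_eq_mul] at hm'
    rw [div_lt_iff₀ hpos] at hm
    linarith
  rw [hX, exp_zero]

theorem Units.noSmallSubgroups {A : Type*} [NormedRing A] [NormedAlgebra ℝ A] [CompleteSpace A] :
    NoSmallSubgroups Aˣ := by
  obtain ⟨U, hUo, hU1, hU⟩ := exists_isOpen_forall_pow_mem_eq_one (A := A)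
  refine ⟨Units.val ⁻¹' U, hUo.preimage Units.continuous_val, hU1, fun H hH => ?_⟩
  refine (Subgroup.eq_bot_iff_forall H).mpr fun u hu => Units.ext (hU _ fun n => ?_)
  simpa using hH (H.pow_mem hu n)

theorem Matrix.GeneralLinearGroup.noSmallSubgroups (n 𝕜 : Type*) [Fintype n] [DecidableEq n]
    [RCLike 𝕜] : NoSmallSubgroups (GL n 𝕜) := by
  let _ : NormedRing (Matrix n n 𝕜) := Matrix.linftyOpNormedRing
  let _ : NormedAlgebra ℝ (Matrix n n 𝕜) := Matrix.linftyOpNormedAlgebra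
  exact Units.noSmallSubgroups

theorem FaithfullyRepresentable.noSmallSubgroups {G : Type*} [Group G] [TopologicalSpace G]
    (hG : FaithfullyRepresentable G) : NoSmallSubgroups G := by
  obtain ⟨n, r, hrc, hri⟩ := hG
  exact (Matrix.GeneralLinearGroup.noSmallSubgroups (Fin n) ℂ).of_injective r hrc hri

namespace ContinuousMonoidHom

variable {K G : Type*} [Group K] [TopologicalSpace K] [Group G] [TopologicalSpace G]

theorem isClopen_setOf_le_ker [T1Space G] (hG : NoSmallSubgroups G) {S : Subgroup K}
    (hS : IsCompact (S : Set K)) :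
    IsClopen {f : ContinuousMonoidHom K G | S ≤ (f : K →* G).ker} := by
  obtain ⟨U, hUo, hU1, hU⟩ := hG
  constructor
  · have : {f : ContinuousMonoidHom K G | S ≤ (f : K →* G).ker} = ⋂ x ∈ S, {f | f x = 1} := by
      ext f; simp [SetLike.le_def]
    rw [this]
    exact isClosed_biInter fun x _ => isClosed_singleton.preimage (continuous_eval_const x)
  · have : {f : ContinuousMonoidHom K G | S ≤ (f : K →* G).ker}
        = toContinuousMap ⁻¹' {g : C(K, G) | Set.MapsTo g S U} := by
      ext f
      refine ⟨fun hf x hx => ?_, fun hf => ?_⟩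
      · exact (show f x = 1 from hf hx) ▸ hU1
      · show S ≤ _
        rw [← Subgroup.map_eq_bot_iff]
        exact hU _ (by simpa [Set.image_subset_iff] using hf.subset_preimage)
    rw [this]
    exact (ContinuousMap.isOpen_setOfPred_mapsTo hS hUo).preimage
      (isInducing_toContinuousMap K G).continuous

theorem ker_le_of_joined [CompactSpace K] [T1Space G] (hG : NoSmallSubgroups G)
    {φ ψ : ContinuousMonoidHom K G} (h : Joined φ ψ) : (φ : K →* G).ker ≤ (ψ : K →* G).ker := by
  obtain ⟨γ⟩ := h
  have hker : IsCompact ((φ : K →* G).ker : Set K) := by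
    rw [MonoidHom.coe_ker]
    exact (isClosed_singleton.preimage φ.continuous).isCompact
  have hrange := (isPreconnected_range γ.continuous).subset_isClopen
    (isClopen_setOf_le_ker hG hker) ⟨φ, ⟨0, γ.source⟩, le_refl (φ : K →* G).ker⟩
  exact hrange ⟨1, γ.target⟩

theorem ker_eq_of_joined [CompactSpace K] [T1Space G] (hG : NoSmallSubgroups G)
    {φ ψ : ContinuousMonoidHom K G} (h : Joined φ ψ) : (φ : K →* G).ker = (ψ : K →* G).ker :=
  le_antisymm (ker_le_of_joined hG h) (ker_le_of_joined hG h.symm)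

theorem ker_conjCMH [IsTopologicalGroup G] (g : G) (φ : ContinuousMonoidHom K G) :
    (conjCMH g φ : K →* G).ker = (φ : K →* G).ker := by
  ext x
  exact conj_eq_one_iff

theorem ker_eq_of_mem_homClass [IsTopologicalGroup G] [CompactSpace K] [T1Space G]
    (hG : NoSmallSubgroups G) {ρ φ : ContinuousMonoidHom K G} (hφ : φ ∈ homClass ρ) :
    (ρ : K →* G).ker = (φ : K →* G).ker := by
  induction hφ with
  | rel a b h =>
    rcases h with hJ | ⟨g, rfl⟩
    · exact ker_eq_of_joined hG hJ
    · exact (ker_conjCMH g a).symm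
  | refl => rfl
  | symm _ _ _ ih => exact ih.symm
  | trans _ _ _ _ _ ih₁ ih₂ => exact ih₁.trans ih₂

theorem injective_of_mem_homClass [IsTopologicalGroup G] [CompactSpace K] [T1Space G]
    (hG : NoSmallSubgroups G) {ρ φ : ContinuousMonoidHom K G} (hρ : Function.Injective ρ)
    (hφ : φ ∈ homClass ρ) : Function.Injective φ := by
  have hker := (MonoidHom.ker_eq_bot_iff (ρ : K →* G)).mpr hρ
  exact (MonoidHom.ker_eq_bot_iff (φ : K →* G)).mp (ker_eq_of_mem_homClass hG hφ ▸ hker)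

end ContinuousMonoidHom

theorem contAut.eq_one_of_precompCMH_eq {K G : Type*} [Group K] [TopologicalSpace K] [Group G]
    [TopologicalSpace G] {φ : ContinuousMonoidHom K G} (hφ : Function.Injective φ)
    {μ : contAut K} (h : precompCMH φ μ = φ) : μ = 1 :=
  Subtype.ext <| MulEquiv.ext fun x => hφ (DFunLike.congr_fun h x)

theorem Mon_action_free_general {K : Type*} [TopologicalSpace K] [Group K] [CompactSpace K]
    {G : Type*} [TopologicalSpace G] [T2Space G] [Group G] [IsTopologicalGroup G]
    (hG : FaithfullyRepresentable G)
    (ρ : ContinuousMonoidHom K G) (hρ : Function.Injective ρ)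
    (φ : ContinuousMonoidHom K G) (hφ : φ ∈ homClass ρ)
    (μ : contAut K) (h : precompCMH φ μ = φ) :
    μ = 1 :=
  contAut.eq_one_of_precompCMH_eq
    (ContinuousMonoidHom.injective_of_mem_homClass hG.noSmallSubgroups hρ hφ) h

/-- the action of the monodromy group on `hom(K,G;ρ)` is free. -/
theorem Mon_action_free {dK : ℕ} {K : Type*} [TopologicalSpace K] [T2Space K]
    [ChartedSpace (EuclideanSpace ℝ (Fin dK)) K] [Group K] [IsTopologicalGroup K]
    [LieGroup (𝓡 dK) (⊤ : ℕ∞) K] [CompactSpace K]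
    {dG : ℕ} {G : Type*} [TopologicalSpace G] [T2Space G]
    [ChartedSpace (EuclideanSpace ℝ (Fin dG)) G] [Group G] [IsTopologicalGroup G]
    [LieGroup (𝓡 dG) (⊤ : ℕ∞) G]
    (hG : FaithfullyRepresentable G)
    (ρ : ContinuousMonoidHom K G) (hρ : Function.Injective ρ)
    (φ : ContinuousMonoidHom K G) (hφ : φ ∈ homClass ρ)
    (μ : contAut K) (hμ : μ ∈ Mon ρ) (h : precompCMH φ μ = φ) :
    μ = 1 :=
  Mon_action_free_general hG ρ hρ φ hφ μ h

end Paper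
end

section
/- Let G be a faithfully representable Lie group, K a compact Lie group, and ρ ∈ hom(K,G) an injective continuous homomorphism. Then for all φ, ψ ∈ hom(K,G;ρ), one has {φ∘μ : μ ∈ Mon(G;ρ)} = {ψ∘μ : μ ∈ Mon(G;ρ)} if and only if φ(K) = ψ(K). -/
open scoped Manifold

noncomputable section Paper

/-! The whole class `hom(K,G;ρ)` consists of injective homomorphisms, because the kernel is
constant on it. Conjugation does not change kernels. Along a path `γ` of homomorphisms,
restrict to the compact group `H = ker γ₀` and compose with a faithful representation `r`;
the Haar average `P_t = ∫_H r(γ_t h) dh` is an idempotent matrix whose trace, the dimension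
of the `H`-fixed vectors, is an integer depending continuously on `t`. It therefore keeps
its value `n` at `t = 0`, so `P₁ = 1` and `γ₁` kills `H`.

Two injective homomorphisms of the compact group `K` with the same image differ by a
homeomorphic automorphism `μ`, and `μ ∈ Mon(G;ρ)` as soon as `φ ∘ μ ∈ hom(K,G;ρ)` for a
single `φ ∈ hom(K,G;ρ)`, since precomposition with `μ` preserves the generating relation. -/

theorem PreconnectedSpace.natCast_complex_constant {X : Type*} [TopologicalSpace X]
    [PreconnectedSpace X] {g : X → ℕ} (hg : Continuous fun x => (g x : ℂ)) (x y : X) :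
    g x = g y := by
  have hcast : Topology.IsClosedEmbedding ((↑) : ℕ → ℂ) :=
    Complex.isometry_ofReal.isClosedEmbedding.comp Nat.isClosedEmbedding_coe_real
  exact PreconnectedSpace.constant inferInstance (hcast.continuous_iff.mpr hg)

section IdempotentMatrix

variable {𝕜 : Type*} [Field 𝕜] {n : ℕ} {P : Matrix (Fin n) (Fin n) 𝕜}

theorem Matrix.isIdempotentElem_toLin' (hP : IsIdempotentElem P) :
    IsIdempotentElem P.toLin' :=
  hP.map Matrix.toLinAlgEquiv'

theorem Matrix.trace_eq_finrank_range_of_isIdempotentElem (hP : IsIdempotentElem P) :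
    P.trace = (Module.finrank 𝕜 (LinearMap.range P.toLin') : 𝕜) := by
  rw [← Matrix.trace_toLin'_eq,
    (LinearMap.IsIdempotentElem.isProj_range _ (isIdempotentElem_toLin' hP)).trace]

theorem Matrix.eq_one_of_isIdempotentElem_of_trace_eq [CharZero 𝕜] (hP : IsIdempotentElem P)
    (htr : P.trace = n) : P = 1 := by
  have h0 : LinearMap.trace 𝕜 _ (1 - P).toLin' = 0 := by
    rw [Matrix.trace_toLin'_eq, Matrix.trace_sub, Matrix.trace_one, htr, Fintype.card_fin,
      sub_self]
  have := LinearMap.IsIdempotentElem.eq_zero_of_trace_eq_zero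
    (Matrix.isIdempotentElem_toLin' hP.one_sub) h0
  rw [← sub_eq_zero, ← neg_sub, neg_eq_zero]
  simpa using congrArg LinearMap.toMatrix' this

end IdempotentMatrix

section Averaging

open MeasureTheory

variable {H : Type*} [MeasurableSpace H] {n : ℕ}

def averageMatrix (μ : Measure H) (F : H → Matrix (Fin n) (Fin n) ℂ) :
    Matrix (Fin n) (Fin n) ℂ :=
  Matrix.of fun i j => ∫ h, F h i j ∂μ

variable [TopologicalSpace H] [CompactSpace H] [BorelSpace H] {μ : Measure H} [IsFiniteMeasure μ]
  {F : H → Matrix (Fin n) (Fin n) ℂ}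

theorem integrable_matrix_apply (hF : Continuous F) (i j : Fin n) :
    Integrable (fun h => F h i j) μ :=
  ((continuous_apply j).comp ((continuous_apply i).comp hF)).integrable_of_hasCompactSupport
    (HasCompactSupport.of_compactSpace _)

theorem mul_averageMatrix (A : Matrix (Fin n) (Fin n) ℂ) (hF : Continuous F) :
    A * averageMatrix μ F = averageMatrix μ fun h => A * F h := by
  ext i j
  simp only [averageMatrix, Matrix.mul_apply, Matrix.of_apply, ← integral_const_mul]
  exact (integral_finsetSum _ fun l _ => (integrable_matrix_apply hF l j).const_mul _).symm

theorem averageMatrix_mul (A : Matrix (Fin n) (Fin n) ℂ) (hF : Continuous F) :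
    averageMatrix μ F * A = averageMatrix μ fun h => F h * A := by
  ext i j
  simp only [averageMatrix, Matrix.mul_apply, Matrix.of_apply, ← integral_mul_const]
  exact (integral_finsetSum _ fun l _ => (integrable_matrix_apply hF i l).mul_const _).symm

theorem trace_averageMatrix (hF : Continuous F) :
    (averageMatrix μ F).trace = ∫ h, (F h).trace ∂μ := by
  simp only [Matrix.trace, Matrix.diag, averageMatrix, Matrix.of_apply]
  exact (integral_finsetSum _ fun i _ => integrable_matrix_apply hF i i).symm

variable [Group H] [ContinuousMul H] [μ.IsMulLeftInvariant] {σ : H →* Matrix (Fin n) (Fin n) ℂ}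

theorem map_mul_averageMatrix (hσ : Continuous σ) (g : H) :
    σ g * averageMatrix μ σ = averageMatrix μ σ := by
  rw [mul_averageMatrix _ hσ]
  ext i j
  simp only [averageMatrix, Matrix.of_apply, ← map_mul]
  exact integral_mul_left_eq_self (fun h => σ h i j) g

theorem isIdempotentElem_averageMatrix [IsProbabilityMeasure μ] (hσ : Continuous σ) :
    IsIdempotentElem (averageMatrix μ σ) := by
  rw [IsIdempotentElem, averageMatrix_mul _ hσ]
  simp only [map_mul_averageMatrix hσ]
  ext i j
  simp [averageMatrix]

end Averaging

open MeasureTheory Measure TopologicalSpace in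
theorem ContinuousMonoidHom.eq_one_of_joined_one {H : Type*} [Group H] [TopologicalSpace H]
    [IsTopologicalGroup H] [CompactSpace H] {n : ℕ}
    {σ : ContinuousMonoidHom H (GL (Fin n) ℂ)} (hσ : Joined 1 σ) : σ = 1 := by
  let _ : MeasurableSpace H := borel H
  have : BorelSpace H := ⟨rfl⟩
  let μ : Measure H := haarMeasure ⊤
  have : IsProbabilityMeasure μ :=
    ⟨by rw [← PositiveCompacts.coe_top (α := H)]; exact haarMeasure_self⟩
  obtain ⟨γ⟩ := hσ
  let F : unitInterval → H →* Matrix (Fin n) (Fin n) ℂ :=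
    fun t => (Units.coeHom _).comp (γ t).toMonoidHom
  have hF : Continuous fun p : unitInterval × H => F p.1 p.2 :=
    Units.continuous_val.comp <|
      (((ContinuousMonoidHom.isInducing_toContinuousMap H _).continuous.comp
        γ.continuous).comp continuous_fst).eval continuous_snd
  have hFt (t : unitInterval) : Continuous (F t) := hF.comp (Continuous.prodMk_right t)
  let rank (t : unitInterval) : ℕ :=
    Module.finrank ℂ (LinearMap.range (averageMatrix μ (F t)).toLin')
  have htrace (t : unitInterval) : (averageMatrix μ (F t)).trace = rank t :=
    Matrix.trace_eq_finrank_range_of_isIdempotentElem (isIdempotentElem_averageMatrix (hFt t))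
  have hrank : rank 1 = rank 0 := by
    refine PreconnectedSpace.natCast_complex_constant ?_ 1 0
    simp_rw [← htrace, trace_averageMatrix (hFt _)]
    simpa using continuous_parametric_integral_of_continuous (μ := μ)
      (f := fun t h => (F t h).trace) (hF.matrix_trace) isCompact_univ
  have hA0 : averageMatrix μ (F 0) = 1 := by
    ext i j
    simp [averageMatrix, F, γ.source, Matrix.one_apply]
  have h1 : averageMatrix μ (F 1) = 1 := by
    refine Matrix.eq_one_of_isIdempotentElem_of_trace_eq
      (isIdempotentElem_averageMatrix (hFt 1)) ?_
    rw [htrace, hrank, ← htrace, hA0, Matrix.trace_one, Fintype.card_fin]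
  ext1 h
  have := map_mul_averageMatrix (μ := μ) (hFt 1) h
  rw [h1, mul_one] at this
  show σ h = 1
  rw [← γ.target]
  exact Units.ext this

theorem apply_eq_one_of_joined {K G : Type*} [Group K] [TopologicalSpace K]
    [IsTopologicalGroup K] [CompactSpace K] [Group G] [TopologicalSpace G] [T1Space G]
    (hG : FaithfullyRepresentable G) {φ ψ : ContinuousMonoidHom K G} (hJ : Joined φ ψ)
    {k : K} (hk : φ k = 1) : ψ k = 1 := by
  obtain ⟨n, r, hrc, hri⟩ := hG
  let H : Subgroup K := φ.toMonoidHom.ker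
  have : CompactSpace H :=
    isCompact_iff_compactSpace.mp (isClosed_singleton.preimage (map_continuous φ)).isCompact
  let res : ContinuousMonoidHom K G → ContinuousMonoidHom H (GL (Fin n) ℂ) :=
    fun χ => (ContinuousMonoidHom.mk r hrc).comp (χ.comp ⟨H.subtype, continuous_subtype_val⟩)
  have hres : Continuous res :=
    (ContinuousMonoidHom.continuous_comp_right _).comp
      (ContinuousMonoidHom.continuous_comp_left _)
  have hφ1 : res φ = 1 := by
    ext1 h
    change r (φ h) = 1
    rw [show φ h = 1 from h.2, map_one]
  have hψ1 := ContinuousMonoidHom.eq_one_of_joined_one (hφ1 ▸ hJ.map hres)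
  exact hri (by rw [map_one]; exact DFunLike.congr_fun hψ1 ⟨k, hk⟩)

theorem apply_eq_one_iff_of_mem_homClass {K G : Type*} [Group K] [TopologicalSpace K]
    [IsTopologicalGroup K] [CompactSpace K] [Group G] [TopologicalSpace G]
    [IsTopologicalGroup G] [T1Space G] (hG : FaithfullyRepresentable G)
    {ρ φ : ContinuousMonoidHom K G} (hφ : φ ∈ homClass ρ) (k : K) :
    φ k = 1 ↔ ρ k = 1 := by
  induction hφ with
  | rel χ ψ h =>
    rcases h with hJ | ⟨g, rfl⟩
    · exact ⟨apply_eq_one_of_joined hG hJ.symm, apply_eq_one_of_joined hG hJ⟩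
    · exact conj_eq_one_iff
  | refl => rfl
  | symm _ _ _ ih => exact ih.symm
  | trans _ _ _ _ _ ih₁ ih₂ => exact ih₂.trans ih₁

theorem injective_of_mem_homClass {K G : Type*} [Group K] [TopologicalSpace K]
    [IsTopologicalGroup K] [CompactSpace K] [Group G] [TopologicalSpace G]
    [IsTopologicalGroup G] [T1Space G] (hG : FaithfullyRepresentable G)
    {ρ φ : ContinuousMonoidHom K G} (hρ : Function.Injective ρ) (hφ : φ ∈ homClass ρ) :
    Function.Injective φ :=
  (injective_iff_map_eq_one φ).mpr fun k hk =>
    (injective_iff_map_eq_one ρ).mp hρ k ((apply_eq_one_iff_of_mem_homClass hG hφ k).mp hk)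

section Precomposition

variable {K G : Type*} [Group K] [TopologicalSpace K] [Group G] [TopologicalSpace G]

theorem range_precompCMH (φ : ContinuousMonoidHom K G) (μ : contAut K) :
    Set.range (precompCMH φ μ) = Set.range φ :=
  (μ : MulAut K).surjective.range_comp φ

theorem precompCMH_precompCMH_inv (φ : ContinuousMonoidHom K G) (μ : contAut K) :
    precompCMH (precompCMH φ μ) μ⁻¹ = φ := by
  rw [← precompCMH_mul, mul_inv_cancel, precompCMH_one]

theorem continuous_precompCMH (μ : contAut K) :
    Continuous fun φ : ContinuousMonoidHom K G => precompCMH φ μ :=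
  ContinuousMonoidHom.continuous_comp_left ⟨(μ : MulAut K).toMonoidHom, μ.2.1⟩

theorem setOf_precompCMH_precompCMH {M : Subgroup (contAut K)} (φ : ContinuousMonoidHom K G)
    {μ : contAut K} (hμ : μ ∈ M) :
    {χ | ∃ ν ∈ M, χ = precompCMH (precompCMH φ μ) ν} = {χ | ∃ ν ∈ M, χ = precompCMH φ ν} := by
  ext χ
  constructor
  · rintro ⟨ν, hν, rfl⟩
    exact ⟨μ * ν, M.mul_mem hμ hν, precompCMH_mul φ μ ν⟩
  · rintro ⟨ν, hν, rfl⟩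
    refine ⟨μ⁻¹ * ν, M.mul_mem (M.inv_mem hμ) hν, ?_⟩
    rw [precompCMH_mul, precompCMH_precompCMH_inv]

variable [IsTopologicalGroup G]

theorem homRel.precompCMH {φ ψ : ContinuousMonoidHom K G} (h : homRel φ ψ) (μ : contAut K) :
    homRel (precompCMH φ μ) (precompCMH ψ μ) := by
  rcases h with hJ | ⟨g, rfl⟩
  · exact Or.inl (hJ.map (continuous_precompCMH μ))
  · exact Or.inr ⟨g, rfl⟩

theorem eqvGen_homRel_precompCMH {φ ψ : ContinuousMonoidHom K G}
    (h : Relation.EqvGen homRel φ ψ) (μ : contAut K) :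
    Relation.EqvGen homRel (precompCMH φ μ) (precompCMH ψ μ) := by
  induction h with
  | rel _ _ h => exact .rel _ _ (h.precompCMH μ)
  | refl => exact .refl _
  | symm _ _ _ ih => exact ih.symm
  | trans _ _ _ _ _ ih₁ ih₂ => exact ih₁.trans _ _ _ ih₂

theorem precompCMH_mem_homClass {ρ φ σ : ContinuousMonoidHom K G} {μ : contAut K}
    (hφ : φ ∈ homClass ρ) (hφμ : precompCMH φ μ ∈ homClass ρ) (hσ : σ ∈ homClass ρ) :
    precompCMH σ μ ∈ homClass ρ :=
  hφμ.trans _ _ _ (eqvGen_homRel_precompCMH (hφ.symm.trans _ _ _ hσ) μ)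

theorem mem_Mon_of_precompCMH_mem {ρ φ : ContinuousMonoidHom K G} {μ : contAut K}
    (hφ : φ ∈ homClass ρ) (hφμ : precompCMH φ μ ∈ homClass ρ) : μ ∈ Mon ρ := by
  rw [mem_Mon_iff]
  refine Set.Subset.antisymm (Set.image_subset_iff.mpr fun σ hσ =>
    precompCMH_mem_homClass hφ hφμ hσ) fun τ hτ => ?_
  have hφ' : precompCMH (precompCMH φ μ) μ⁻¹ ∈ homClass ρ := by
    rwa [precompCMH_precompCMH_inv]
  refine ⟨precompCMH τ μ⁻¹, precompCMH_mem_homClass hφμ hφ' hτ, ?_⟩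
  simpa using precompCMH_precompCMH_inv τ μ⁻¹

end Precomposition

theorem exists_precompCMH_eq_of_range_eq {K G : Type*} [Group K] [TopologicalSpace K]
    [CompactSpace K] [Group G] [TopologicalSpace G] [T2Space G]
    {φ ψ : ContinuousMonoidHom K G} (hφ : Function.Injective φ) (hψ : Function.Injective ψ)
    (h : Set.range φ = Set.range ψ) : ∃ μ : contAut K, precompCMH φ μ = ψ := by
  have hrange : ψ.toMonoidHom.range = φ.toMonoidHom.range :=
    SetLike.coe_injective (by simpa using h.symm)
  let e : K ≃* K := (MonoidHom.ofInjective hψ).trans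
    ((MulEquiv.subgroupCongr hrange).trans (MonoidHom.ofInjective hφ).symm)
  have he (k : K) : φ (e k) = ψ k :=
    MonoidHom.apply_ofInjective_symm (f := φ.toMonoidHom) hφ _
  have he_symm (k : K) : ψ (e.symm k) = φ k := by
    rw [← he, e.apply_symm_apply]
  have hφe := ((map_continuous φ).isClosedEmbedding hφ).continuous_iff (f := e)
  have hψe := ((map_continuous ψ).isClosedEmbedding hψ).continuous_iff (f := e.symm)
  refine ⟨⟨e, hφe.mpr ?_, hψe.mpr ?_⟩, DFunLike.ext _ _ he⟩
  · simpa [Function.comp_def, he] using map_continuous ψ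
  · simpa [Function.comp_def, he_symm] using map_continuous φ

theorem Mon_coset_iff_same_image_general {K : Type*} [TopologicalSpace K]
    [Group K] [IsTopologicalGroup K]
    [CompactSpace K]
    {G : Type*} [TopologicalSpace G] [T2Space G]
    [Group G] [IsTopologicalGroup G]
    (hG : FaithfullyRepresentable G)
    (ρ : ContinuousMonoidHom K G) (hρ : Function.Injective ρ)
    (φ : ContinuousMonoidHom K G) (hφ : φ ∈ homClass ρ)
    (ψ : ContinuousMonoidHom K G) (hψ : ψ ∈ homClass ρ) :
    {χ : ContinuousMonoidHom K G | ∃ μ ∈ Mon ρ, χ = precompCMH φ μ} =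
        {χ : ContinuousMonoidHom K G | ∃ μ ∈ Mon ρ, χ = precompCMH ψ μ} ↔
      Set.range (⇑φ : K → G) = Set.range (⇑ψ : K → G) := by
  constructor
  · intro h
    have hφ_mem : φ ∈ {χ | ∃ μ ∈ Mon ρ, χ = precompCMH φ μ} :=
      ⟨1, (Mon ρ).one_mem, (precompCMH_one φ).symm⟩
    obtain ⟨μ, -, rfl⟩ := h ▸ hφ_mem
    exact range_precompCMH ψ μ
  · intro h
    obtain ⟨μ, rfl⟩ := exists_precompCMH_eq_of_range_eq (injective_of_mem_homClass hG hρ hφ)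
      (injective_of_mem_homClass hG hρ hψ) h
    exact (setOf_precompCMH_precompCMH φ (mem_Mon_of_precompCMH_mem hφ hψ)).symm

/-- two members of `hom(K,G;ρ)` have the same `Mon(G;ρ)`-coset iff they have the
same image. -/
theorem Mon_coset_iff_same_image {dK : ℕ} {K : Type*} [TopologicalSpace K] [T2Space K]
    [ChartedSpace (EuclideanSpace ℝ (Fin dK)) K] [Group K] [IsTopologicalGroup K]
    [LieGroup (𝓡 dK) ((⊤ : ℕ∞) : WithTop ℕ∞) K] [CompactSpace K]
    {dG : ℕ} {G : Type*} [TopologicalSpace G] [T2Space G]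
    [ChartedSpace (EuclideanSpace ℝ (Fin dG)) G] [Group G] [IsTopologicalGroup G]
    [LieGroup (𝓡 dG) ((⊤ : ℕ∞) : WithTop ℕ∞) G]
    (hG : FaithfullyRepresentable G)
    (ρ : ContinuousMonoidHom K G) (hρ : Function.Injective ρ)
    (φ : ContinuousMonoidHom K G) (hφ : φ ∈ homClass ρ)
    (ψ : ContinuousMonoidHom K G) (hψ : ψ ∈ homClass ρ) :
    {χ : ContinuousMonoidHom K G | ∃ μ ∈ Mon ρ, χ = precompCMH φ μ} =
        {χ : ContinuousMonoidHom K G | ∃ μ ∈ Mon ρ, χ = precompCMH ψ μ} ↔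
      Set.range (⇑φ : K → G) = Set.range (⇑ψ : K → G) :=
  Mon_coset_iff_same_image_general hG ρ hρ φ hφ ψ hψ

end Paper
end
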